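/- (Failure/prediction of the Madelung rule in the large-Z limit.) For an orbital o let c(o) denote its capacity and let B(o) = Σ_{o′ strictly preceding o} c(o′). For integers Z ≥ 1 and ℓ ≥ 0, define the Madelung occupation number N_ℓ(Z) = Σ_{ν ≥ ℓ+1} min( max(Z − B(ν,ℓ), 0), 2(2ℓ+1) ), i.e. the number of electrons with angular momentum ℓ when Z electrons fill the orbitals in Madelung order. Then for every λ > 0, with ℓ_Z = ⌈λ·Z^{1/3}⌉, one has lim_{Z→∞} N_{ℓ_Z}(Z) / ( 2(2ℓ_Z+1)·Z^{1/3} ) = max{6^{1/3} − 2λ, 0} = κ^Madelung(λ). -/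

import Mathlib

open Finset Filter Real

/-- The (finite) set of orbitals `(ν', ℓ')` (with `ν' ≥ ℓ' + 1`) strictly preceding the
orbital `o = (ν, ℓ)` in the Madelung order: `ν' + ℓ' < ν + ℓ`, or
`ν' + ℓ' = ν + ℓ` and `ν' < ν`. -/
def madelungPred (o : ℕ × ℕ) : Finset (ℕ × ℕ) :=
  (Finset.range (o.1 + o.2 + 1) ×ˢ Finset.range (o.1 + o.2 + 1)).filter
    (fun p => p.2 + 1 ≤ p.1 ∧
      (p.1 + p.2 < o.1 + o.2 ∨ (p.1 + p.2 = o.1 + o.2 ∧ p.1 < o.1)))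

/-- `B(o)`: the number of electrons in orbitals strictly preceding `o` in the Madelung
order, i.e. the sum of the capacities `2(2ℓ'+1)` of the preceding orbitals. -/
def madelungB (o : ℕ × ℕ) : ℕ := ∑ p ∈ madelungPred o, 2 * (2 * p.2 + 1)

/-- `N_ℓ(Z)`: the number of electrons with angular momentum `ℓ` when `Z` electrons fill
the orbitals in Madelung order. -/
noncomputable def madelungN (ℓ Z : ℕ) : ℝ :=
  ∑' ν : ℕ, if ℓ + 1 ≤ ν then
    min (max ((Z : ℝ) - (madelungB (ν, ℓ) : ℝ)) 0) (2 * (2 * (ℓ : ℝ) + 1)) else 0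

/-! Grouping orbitals by `n = ν + ℓ`, the orbitals with `ν + ℓ ≤ n` hold between `n³/6` and
`(n + 2)³/6` electrons. Hence `(ν, ℓ)` is full once `(ν + ℓ + 2)³ ≤ 6Z - 12(ℓ + 1)²` and empty
once `(ν + ℓ)³ ≥ 6Z + 12(ℓ + 1)²`. For `ℓ ~ λ Z^{1/3}` both thresholds are
`(6Z)^{1/3} + o(Z^{1/3})`, so the numbers of full and of nonempty `ℓ`-orbitals are both
`max((6Z)^{1/3} - 2ℓ, 0) + o(Z^{1/3})`, and each holds `2(2ℓ + 1)` electrons. -/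

open scoped Topology

/-- The total capacity of the orbitals `(ν, ℓ)` with `ν + ℓ ≤ n`: for each `ℓ = b` there are
`n - 2b` of them. -/
def cumulativeCapacity (n : ℕ) : ℕ :=
  ∑ b ∈ range (n + 1), 2 * (2 * b + 1) * (n - 2 * b)

lemma sum_range_capacity (m : ℕ) : ∑ b ∈ range m, 2 * (2 * b + 1) = 2 * m ^ 2 := by
  induction m with
  | zero => simp
  | succ k ih => rw [sum_range_succ, ih]; ring

lemma cumulativeCapacity_succ (n : ℕ) :
    cumulativeCapacity (n + 1) = cumulativeCapacity n + 2 * (n / 2 + 1) ^ 2 := by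
  have hsplit : ∀ b ∈ range (n + 1), 2 * (2 * b + 1) * (n + 1 - 2 * b) =
      2 * (2 * b + 1) * (n - 2 * b) + if 2 * b ≤ n then 2 * (2 * b + 1) else 0 := by
    intro b _
    split_ifs with h
    · rw [show n + 1 - 2 * b = n - 2 * b + 1 by omega, Nat.mul_succ]
    · rw [show n + 1 - 2 * b = 0 by omega, show n - 2 * b = 0 by omega, add_zero]
  have hfilter : (range (n + 1)).filter (fun b => 2 * b ≤ n) = range (n / 2 + 1) := by
    ext b; simp only [mem_filter, mem_range]; omega
  rw [cumulativeCapacity, sum_range_succ, Nat.sub_eq_zero_of_le (by omega), mul_zero, add_zero,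
    sum_congr rfl hsplit, sum_add_distrib, ← sum_filter, hfilter, sum_range_capacity,
    cumulativeCapacity]

lemma cumulativeCapacity_bounds (n : ℕ) :
    n ^ 3 ≤ 6 * cumulativeCapacity n ∧ 6 * cumulativeCapacity n ≤ (n + 2) ^ 3 := by
  induction n with
  | zero => simp [cumulativeCapacity]
  | succ k ih =>
    obtain ⟨ih₁, ih₂⟩ := ih
    rw [cumulativeCapacity_succ, Nat.mul_add]
    obtain ⟨m, rfl | rfl⟩ := Nat.even_or_odd' k
    · rw [show 2 * m / 2 = m by omega]
      constructor <;> ring_nf at ih₁ ih₂ ⊢ <;> linarith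
    · rw [show (2 * m + 1) / 2 = m by omega]
      constructor <;> ring_nf at ih₁ ih₂ ⊢ <;> linarith

/-- The orbitals preceding `(ν, ℓ)`, together with the `(ν', ℓ')` with `ℓ' ≤ ℓ` on the diagonal
`ν' + ℓ' = ν + ℓ`, are exactly those with `ν' + ℓ' ≤ ν + ℓ`. -/
lemma madelungB_add_eq (ν ℓ : ℕ) (h : ℓ < ν) :
    madelungB (ν, ℓ) + 2 * (ℓ + 1) ^ 2 = cumulativeCapacity (ν + ℓ) := by
  set n := ν + ℓ
  have hcount : ∀ b ∈ range (n + 1),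
      ((range (n + 1)).filter fun a => b + 1 ≤ a ∧ (a + b < n ∨ a + b = n ∧ a < ν)) =
        Ico (b + 1) (if ℓ < b then n + 1 - b else n - b) := by
    intro b _
    ext a
    simp only [mem_filter, mem_range, mem_Ico]
    split_ifs <;> omega
  have hB : madelungB (ν, ℓ) = ∑ b ∈ range (n + 1),
      2 * (2 * b + 1) * ((if ℓ < b then n + 1 - b else n - b) - (b + 1)) := by
    rw [madelungB, madelungPred, sum_filter, sum_product_right]
    refine sum_congr rfl fun b hb => ?_
    dsimp only
    rw [← sum_filter, hcount b hb, sum_const, Nat.card_Ico, smul_eq_mul, mul_comm]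
  have hdiag : 2 * (ℓ + 1) ^ 2 = ∑ b ∈ range (n + 1), if b ≤ ℓ then 2 * (2 * b + 1) else 0 := by
    rw [← sum_filter, show (range (n + 1)).filter (· ≤ ℓ) = range (ℓ + 1) by
      ext b; simp only [mem_filter, mem_range]; omega, sum_range_capacity]
  rw [hB, hdiag, ← sum_add_distrib, cumulativeCapacity]
  refine sum_congr rfl fun b _ => ?_
  rcases lt_or_ge ℓ b with hb | hb
  · rw [if_pos hb, if_neg (by omega), add_zero, show n + 1 - b - (b + 1) = n - 2 * b by omega]
  · rw [if_neg (by omega), if_pos hb, ← Nat.mul_succ,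
      show (n - b - (b + 1)).succ = n - 2 * b by omega]

lemma pow_three_le_madelungB (ν ℓ : ℕ) (h : ℓ < ν) :
    (ν + ℓ) ^ 3 ≤ 6 * madelungB (ν, ℓ) + 12 * (ℓ + 1) ^ 2 := by
  have := (cumulativeCapacity_bounds (ν + ℓ)).1
  rw [← madelungB_add_eq ν ℓ h] at this
  linarith

lemma madelungB_le_pow_three (ν ℓ : ℕ) (h : ℓ < ν) :
    6 * madelungB (ν, ℓ) + 12 * (ℓ + 1) ^ 2 ≤ (ν + ℓ + 2) ^ 3 := by
  have := (cumulativeCapacity_bounds (ν + ℓ)).2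
  rw [← madelungB_add_eq ν ℓ h] at this
  linarith

lemma tsum_le_card_mul {β : Type*} {f : β → ℝ} {s : Finset β} {c : ℝ}
    (hzero : ∀ x ∉ s, f x = 0) (hle : ∀ x ∈ s, f x ≤ c) : ∑' x, f x ≤ #s * c := by
  rw [tsum_eq_sum hzero, ← nsmul_eq_mul]
  exact sum_le_card_nsmul s f c hle

lemma card_mul_le_tsum {β : Type*} {f : β → ℝ} {s t : Finset β} {c : ℝ}
    (hzero : ∀ x ∉ s, f x = 0) (hnonneg : ∀ x, 0 ≤ f x) (heq : ∀ x ∈ t, f x = c) :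
    #t * c ≤ ∑' x, f x := by
  rw [← nsmul_eq_mul, ← sum_const, ← sum_congr rfl heq]
  exact (summable_of_ne_finset_zero hzero).sum_le_tsum t fun x _ => hnonneg x

noncomputable def madelungOcc (ℓ Z ν : ℕ) : ℝ :=
  if ℓ + 1 ≤ ν then
    min (max ((Z : ℝ) - (madelungB (ν, ℓ) : ℝ)) 0) (2 * (2 * (ℓ : ℝ) + 1)) else 0

lemma madelungN_eq_tsum (ℓ Z : ℕ) : madelungN ℓ Z = ∑' ν, madelungOcc ℓ Z ν := rfl

lemma madelungOcc_nonneg (ℓ Z ν : ℕ) : 0 ≤ madelungOcc ℓ Z ν := by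
  unfold madelungOcc
  split_ifs
  · exact le_min (le_max_right _ _) (by positivity)
  · rfl

lemma madelungOcc_le (ℓ Z ν : ℕ) : madelungOcc ℓ Z ν ≤ 2 * (2 * (ℓ : ℝ) + 1) := by
  unfold madelungOcc
  split_ifs
  · exact min_le_right _ _
  · positivity

lemma madelungOcc_eq_zero {ℓ Z ν : ℕ} (h : ℓ < ν → Z ≤ madelungB (ν, ℓ)) :
    madelungOcc ℓ Z ν = 0 := by
  unfold madelungOcc
  split_ifs with hν
  · have : (Z : ℝ) ≤ madelungB (ν, ℓ) := by exact_mod_cast h hν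
    rw [max_eq_right (by linarith), min_eq_left (by positivity)]
  · rfl

lemma madelungOcc_eq_capacity {ℓ Z ν : ℕ} (hν : ℓ < ν)
    (h : madelungB (ν, ℓ) + 2 * (2 * ℓ + 1) ≤ Z) :
    madelungOcc ℓ Z ν = 2 * (2 * (ℓ : ℝ) + 1) := by
  have : (madelungB (ν, ℓ) : ℝ) + 2 * (2 * ℓ + 1) ≤ Z := by exact_mod_cast h
  rw [madelungOcc, if_pos (show ℓ + 1 ≤ ν from hν), max_eq_left (by linarith),
    min_eq_right (by linarith)]

lemma madelungN_le {ℓ Z u : ℕ} (hu : 6 * Z + 12 * (ℓ + 1) ^ 2 ≤ (u + 1) ^ 3) :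
    madelungN ℓ Z ≤ ((u - 2 * ℓ : ℕ) : ℝ) * (2 * (2 * ℓ + 1)) := by
  have hcard : #(Ico (ℓ + 1) (u + 1 - ℓ)) = u - 2 * ℓ := by rw [Nat.card_Ico]; omega
  rw [madelungN_eq_tsum, ← hcard]
  refine tsum_le_card_mul (fun ν hν => madelungOcc_eq_zero fun hℓν => ?_)
    fun ν _ => madelungOcc_le ℓ Z ν
  have hνℓ : (u + 1) ^ 3 ≤ (ν + ℓ) ^ 3 :=
    Nat.pow_le_pow_left (by rw [mem_Ico] at hν; omega) 3
  have := pow_three_le_madelungB ν ℓ hℓν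
  omega

lemma le_madelungN {ℓ Z t : ℕ} (ht : t ^ 3 ≤ 6 * Z - 12 * (ℓ + 1) ^ 2) :
    ((t - 2 * (ℓ + 1) : ℕ) : ℝ) * (2 * (2 * ℓ + 1)) ≤ madelungN ℓ Z := by
  have hcard : #(Ico (ℓ + 1) (t - (ℓ + 1))) = t - 2 * (ℓ + 1) := by rw [Nat.card_Ico]; omega
  rw [madelungN_eq_tsum, ← hcard]
  refine card_mul_le_tsum (s := range (6 * Z + 12 * (ℓ + 1) ^ 2))
    (fun ν hν => madelungOcc_eq_zero fun hℓν => ?_) (madelungOcc_nonneg ℓ Z) fun ν hν => ?_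
  · have hν3 : ν ≤ (ν + ℓ) ^ 3 := le_trans (Nat.le_add_right ν ℓ) (Nat.le_self_pow (by norm_num) _)
    have := pow_three_le_madelungB ν ℓ hℓν
    rw [mem_range] at hν
    omega
  · rw [mem_Ico] at hν
    have hνt : (ν + ℓ + 2) ^ 3 ≤ t ^ 3 := Nat.pow_le_pow_left (by omega) 3
    have hℓ : 2 * ℓ + 1 ≤ (ℓ + 1) ^ 2 := by nlinarith
    have := madelungB_le_pow_three ν ℓ (by omega)
    refine madelungOcc_eq_capacity (by omega) ?_
    omega

lemma natCast_sub_eq_max (a b : ℕ) : ((a - b : ℕ) : ℝ) = max ((a : ℝ) - b) 0 := by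
  rcases le_total b a with h | h
  · rw [Nat.cast_sub h, max_eq_left (by simpa using h)]
  · rw [Nat.sub_eq_zero_of_le h, Nat.cast_zero, max_eq_right (by simpa using h)]

section Asymptotics

variable {α : Type*} {l : Filter α}

lemma tendsto_natCast_sub_div {a b : α → ℕ} {s : α → ℝ} {A B : ℝ} (hs : ∀ᶠ i in l, 0 < s i)
    (ha : Tendsto (fun i => (a i : ℝ) / s i) l (𝓝 A))
    (hb : Tendsto (fun i => (b i : ℝ) / s i) l (𝓝 B)) :
    Tendsto (fun i => ((a i - b i : ℕ) : ℝ) / s i) l (𝓝 (max (A - B) 0)) := by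
  refine ((ha.sub hb).max tendsto_const_nhds).congr' ?_
  filter_upwards [hs] with i hi
  rw [natCast_sub_eq_max, ← max_div_div_right hi.le, zero_div, sub_div]

lemma tendsto_natFloor_div {x s : α → ℝ} {L : ℝ} (hs : Tendsto s l atTop)
    (hx : ∀ᶠ i in l, 0 ≤ x i) (h : Tendsto (fun i => x i / s i) l (𝓝 L)) :
    Tendsto (fun i => (⌊x i⌋₊ : ℝ) / s i) l (𝓝 L) := by
  have hlower : Tendsto (fun i => x i / s i - (s i)⁻¹) l (𝓝 L) := by
    simpa using h.sub hs.inv_tendsto_atTop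
  refine tendsto_of_tendsto_of_tendsto_of_le_of_le' hlower h ?_ ?_
  · filter_upwards [hs.eventually_gt_atTop 0] with i hi
    rw [inv_eq_one_div, div_sub_div_same]
    exact div_le_div_of_nonneg_right (Nat.sub_one_lt_floor _).le hi.le
  · filter_upwards [hs.eventually_gt_atTop 0, hx] with i hi hxi
    exact div_le_div_of_nonneg_right (Nat.floor_le hxi) hi.le

lemma tendsto_natFloor_rpow_div {y z : α → ℝ} {a r : ℝ} (hr : 0 < r) (hz : Tendsto z l atTop)
    (hy : ∀ i, 0 ≤ y i) (h : Tendsto (fun i => y i / z i) l (𝓝 a)) :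
    Tendsto (fun i => (⌊y i ^ r⌋₊ : ℝ) / z i ^ r) l (𝓝 (a ^ r)) := by
  refine tendsto_natFloor_div ((tendsto_rpow_atTop hr).comp hz)
    (.of_forall fun i => Real.rpow_nonneg (hy i) r) ((h.rpow_const (.inr hr.le)).congr' ?_)
  filter_upwards [hz.eventually_ge_atTop 0] with i hi
  exact Real.div_rpow (hy i) hi r

lemma tendsto_add_one_div {x s : α → ℝ} {L : ℝ} (hs : Tendsto s l atTop)
    (hx : Tendsto (fun i => x i / s i) l (𝓝 L)) :
    Tendsto (fun i => (x i + 1) / s i) l (𝓝 L) := by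
  simpa [add_div] using hx.add hs.inv_tendsto_atTop

lemma tendsto_sq_div_pow_three {x s : α → ℝ} {L : ℝ} (hs : Tendsto s l atTop)
    (hx : Tendsto (fun i => x i / s i) l (𝓝 L)) :
    Tendsto (fun i => x i ^ 2 / s i ^ 3) l (𝓝 0) := by
  refine ((hx.pow 2).mul hs.inv_tendsto_atTop).congr' ?_ |>.trans (by rw [mul_zero])
  filter_upwards [hs.eventually_gt_atTop 0] with i hi
  simp only [Pi.inv_apply]
  field_simp

end Asymptotics

noncomputable def floorCbrt (m : ℕ) : ℕ := ⌊(m : ℝ) ^ ((1 : ℝ) / 3)⌋₊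

lemma rpow_one_third_pow_three {x : ℝ} (hx : 0 ≤ x) : (x ^ ((1 : ℝ) / 3)) ^ 3 = x := by
  rw [← Real.rpow_natCast, ← Real.rpow_mul hx]
  norm_num

lemma floorCbrt_pow_three_le (m : ℕ) : floorCbrt m ^ 3 ≤ m := by
  have hx : (0 : ℝ) ≤ (m : ℝ) ^ ((1 : ℝ) / 3) := by positivity
  have : (floorCbrt m : ℝ) ^ 3 ≤ m := by
    calc _ ≤ ((m : ℝ) ^ ((1 : ℝ) / 3)) ^ 3 := pow_le_pow_left₀ (by positivity) (Nat.floor_le hx) 3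
      _ = m := rpow_one_third_pow_three (Nat.cast_nonneg m)
  exact_mod_cast this

lemma lt_floorCbrt_add_one_pow_three (m : ℕ) : m < (floorCbrt m + 1) ^ 3 := by
  have hx : (0 : ℝ) ≤ (m : ℝ) ^ ((1 : ℝ) / 3) := by positivity
  have : (m : ℝ) < ((floorCbrt m : ℝ) + 1) ^ 3 := by
    calc (m : ℝ) = ((m : ℝ) ^ ((1 : ℝ) / 3)) ^ 3 :=
          (rpow_one_third_pow_three (Nat.cast_nonneg m)).symm
      _ < _ := pow_lt_pow_left₀ (Nat.lt_floor_add_one _) hx (by norm_num)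
  exact_mod_cast this

lemma tendsto_cbrt_atTop : Tendsto (fun Z : ℕ => (Z : ℝ) ^ ((1 : ℝ) / 3)) atTop atTop :=
  (tendsto_rpow_atTop (by norm_num)).comp tendsto_natCast_atTop_atTop

lemma tendsto_floorCbrt_div {m : ℕ → ℕ} {a : ℝ}
    (hm : Tendsto (fun Z => (m Z : ℝ) / Z) atTop (𝓝 a)) :
    Tendsto (fun Z => (floorCbrt (m Z) : ℝ) / (Z : ℝ) ^ ((1 : ℝ) / 3)) atTop
      (𝓝 (a ^ ((1 : ℝ) / 3))) :=
  tendsto_natFloor_rpow_div (by norm_num) tendsto_natCast_atTop_atTop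
    (fun _ => Nat.cast_nonneg _) hm

section AngularMomentum

variable {ℓ : ℕ → ℕ} {lam : ℝ}

lemma tendsto_twelve_mul_add_one_sq_div
    (hℓ : Tendsto (fun Z => (ℓ Z : ℝ) / (Z : ℝ) ^ ((1 : ℝ) / 3)) atTop (𝓝 lam)) :
    Tendsto (fun Z => ((12 * (ℓ Z + 1) ^ 2 : ℕ) : ℝ) / Z) atTop (𝓝 0) := by
  have := (tendsto_sq_div_pow_three tendsto_cbrt_atTop
    (tendsto_add_one_div tendsto_cbrt_atTop hℓ)).const_mul 12
  rw [mul_zero] at this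
  refine this.congr fun Z => ?_
  rw [rpow_one_third_pow_three (Nat.cast_nonneg Z)]
  push_cast
  ring

lemma tendsto_six_mul_div : Tendsto (fun Z : ℕ => ((6 * Z : ℕ) : ℝ) / Z) atTop (𝓝 6) := by
  refine tendsto_const_nhds.congr' ?_
  filter_upwards [eventually_gt_atTop 0] with Z hZ
  field_simp
  push_cast
  ring

lemma tendsto_floorCbrt_sub_div
    (hℓ : Tendsto (fun Z => (ℓ Z : ℝ) / (Z : ℝ) ^ ((1 : ℝ) / 3)) atTop (𝓝 lam)) :
    Tendsto (fun Z => ((floorCbrt (6 * Z - 12 * (ℓ Z + 1) ^ 2) - 2 * (ℓ Z + 1) : ℕ) : ℝ) /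
      (Z : ℝ) ^ ((1 : ℝ) / 3)) atTop (𝓝 (max ((6 : ℝ) ^ ((1 : ℝ) / 3) - 2 * lam) 0)) := by
  have hroot := tendsto_floorCbrt_div (by
    simpa using tendsto_natCast_sub_div (tendsto_natCast_atTop_atTop.eventually_gt_atTop 0)
      tendsto_six_mul_div (tendsto_twelve_mul_add_one_sq_div hℓ))
  refine tendsto_natCast_sub_div (tendsto_cbrt_atTop.eventually_gt_atTop 0) hroot ?_
  simpa [mul_div_assoc] using (tendsto_add_one_div tendsto_cbrt_atTop hℓ).const_mul 2

lemma tendsto_floorCbrt_add_div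
    (hℓ : Tendsto (fun Z => (ℓ Z : ℝ) / (Z : ℝ) ^ ((1 : ℝ) / 3)) atTop (𝓝 lam)) :
    Tendsto (fun Z => ((floorCbrt (6 * Z + 12 * (ℓ Z + 1) ^ 2) - 2 * ℓ Z : ℕ) : ℝ) /
      (Z : ℝ) ^ ((1 : ℝ) / 3)) atTop (𝓝 (max ((6 : ℝ) ^ ((1 : ℝ) / 3) - 2 * lam) 0)) := by
  have hroot := tendsto_floorCbrt_div (m := fun Z => 6 * Z + 12 * (ℓ Z + 1) ^ 2) (by
    simpa [add_div] using tendsto_six_mul_div.add (tendsto_twelve_mul_add_one_sq_div hℓ))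
  refine tendsto_natCast_sub_div (tendsto_cbrt_atTop.eventually_gt_atTop 0) hroot ?_
  simpa [mul_div_assoc] using hℓ.const_mul 2

end AngularMomentum

/-- prediction of the Madelung rule in the large-`Z` limit: for every
`λ > 0`, with `ℓ_Z = ⌈λ Z^{1/3}⌉`, the normalized Madelung occupation numbers converge:
`N_{ℓ_Z}(Z) / (2(2ℓ_Z+1) Z^{1/3}) → max{6^{1/3} − 2λ, 0} = κ^Madelung(λ)`. -/
theorem madelung_occupation_limit (lam : ℝ) (hlam : 0 < lam) :
    Tendsto (fun Z : ℕ =>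
        madelungN (⌈lam * (Z : ℝ) ^ ((1:ℝ)/3)⌉₊) Z /
          (2 * (2 * ((⌈lam * (Z : ℝ) ^ ((1:ℝ)/3)⌉₊ : ℕ) : ℝ) + 1) * (Z : ℝ) ^ ((1:ℝ)/3)))
      atTop (nhds (max ((6:ℝ) ^ ((1:ℝ)/3) - 2 * lam) 0)) := by
  have hℓ : Tendsto (fun Z : ℕ => (⌈lam * (Z : ℝ) ^ ((1 : ℝ) / 3)⌉₊ : ℝ) / (Z : ℝ) ^ ((1 : ℝ) / 3))
      atTop (𝓝 lam) :=
    (tendsto_nat_ceil_mul_div_atTop hlam.le).comp tendsto_cbrt_atTop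
  refine tendsto_of_tendsto_of_tendsto_of_le_of_le' (tendsto_floorCbrt_sub_div hℓ)
    (tendsto_floorCbrt_add_div hℓ) ?_ ?_ <;>
    filter_upwards [tendsto_cbrt_atTop.eventually_gt_atTop 0] with Z hZ
  · rw [div_le_div_iff₀ hZ (by positivity), ← mul_assoc]
    exact mul_le_mul_of_nonneg_right (le_madelungN (floorCbrt_pow_three_le _)) hZ.le
  · rw [div_le_div_iff₀ (by positivity) hZ, ← mul_assoc]
    exact mul_le_mul_of_nonneg_right (madelungN_le (lt_floorCbrt_add_one_pow_three _).le) hZ.le
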